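/- Let R be a Markov transition kernel on a measurable state space S satisfying the Doeblin condition: there exist a constant c ∈ (0,1] and a probability measure μ on S such that R(a, B) ≥ c·μ(B) for every a ∈ S and every measurable B. Then R admits a unique invariant probability measure ν, and sup_{a ∈ S} ||R^m(a, ·) − ν(·)||_var ≤ (1-c)^m for all m ≥ 0, where ||·||_var denotes total variation distance. -/

import Mathlib

open MeasureTheory ProbabilityTheory

noncomputable section

/-- Iterates of a Markov kernel: `kpow R m` is the `m`-step kernel `R^m`. -/
def kpow {S : Type*} [MeasurableSpace S] (R : Kernel S S) : ℕ → Kernel S S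
  | 0 => Kernel.id
  | n + 1 => R ∘ₖ kpow R n

/-! A Doeblin minorant `ϖ ≤ R a` (here `ϖ = c • μ`) splits `R = ϖ + Q` with a residual kernel `Q`
of constant mass `1 - c`, so that `ρR = ρ(S) • ϖ + ρQ`. One step of `R` thus replaces two measures
of equal mass `t` by measures sharing the part `t • ϖ` and differing only by parts of mass
`t (1 - c)`; by induction `ρRᵐ(B) ≤ ρ'Rᵐ(B) + t (1 - c)ᵐ`, which gives the rate and uniqueness.
The invariant measure is the series `ν = ∑ₖ ϖ Qᵏ`, of mass `∑ₖ c (1 - c)ᵏ = 1`, and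
`νR = ϖ + νQ = ν`. -/

section Doeblin

open scoped ENNReal
open Set Filter

variable {S : Type*} [MeasurableSpace S]

instance isMarkovKernel_kpow (R : Kernel S S) [IsMarkovKernel R] (m : ℕ) :
    IsMarkovKernel (kpow R m) := by
  induction m with
  | zero => rw [kpow]; infer_instance
  | succ n ih => rw [kpow]; infer_instance

lemma kpow_succ (R : Kernel S S) (n : ℕ) : kpow R (n + 1) = kpow R n ∘ₖ R := by
  induction n with
  | zero => exact (Kernel.comp_id R).trans (Kernel.id_comp R).symm
  | succ n ih =>
    conv_lhs => rw [kpow, ih, ← Kernel.comp_assoc]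
    rfl

lemma kpow_zero_comp (R : Kernel S S) (ρ : Measure S) : kpow R 0 ∘ₘ ρ = ρ :=
  Measure.id_comp

lemma kpow_succ_comp (R : Kernel S S) (n : ℕ) (ρ : Measure S) :
    kpow R (n + 1) ∘ₘ ρ = R ∘ₘ (kpow R n ∘ₘ ρ) :=
  Measure.comp_assoc.symm

lemma kpow_succ_comp' (R : Kernel S S) (n : ℕ) (ρ : Measure S) :
    kpow R (n + 1) ∘ₘ ρ = kpow R n ∘ₘ (R ∘ₘ ρ) := by
  rw [kpow_succ, Measure.comp_assoc]

lemma kpow_comp_of_comp_eq {R : Kernel S S} {ρ : Measure S} (h : R ∘ₘ ρ = ρ) (n : ℕ) :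
    kpow R n ∘ₘ ρ = ρ := by
  induction n with
  | zero => exact kpow_zero_comp R ρ
  | succ n ih => rw [kpow_succ_comp, ih, h]

lemma ENNReal.le_of_forall_le_add_mul_pow {x y t r : ℝ≥0∞} (ht : t ≠ ∞) (hr : r < 1)
    (h : ∀ m : ℕ, x ≤ y + t * r ^ m) : x ≤ y := by
  have hlim : Tendsto (fun m : ℕ => y + t * r ^ m) atTop (nhds (y + t * 0)) :=
    tendsto_const_nhds.add
      (ENNReal.Tendsto.const_mul (ENNReal.tendsto_pow_atTop_nhds_zero_of_lt_one hr) (Or.inr ht))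
  simpa using ge_of_tendsto' hlim h

lemma ENNReal.abs_toReal_sub_toReal_le {x y r : ℝ≥0∞} (hx : x ≠ ∞) (hy : y ≠ ∞) (hr : r ≠ ∞)
    (hxy : x ≤ y + r) (hyx : y ≤ x + r) : |x.toReal - y.toReal| ≤ r.toReal :=
  abs_sub_le_iff.2 ⟨sub_le_iff_le_add'.2 (ENNReal.toReal_le_add hxy hy hr),
    sub_le_iff_le_add'.2 (ENNReal.toReal_le_add hyx hx hr)⟩

lemma measure_univ_le_one_of_forall_le {R : Kernel S S} [IsMarkovKernel R] {ϖ : Measure S}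
    (hϖ : ∀ a, ϖ ≤ R a) : ϖ univ ≤ 1 := by
  rcases isEmpty_or_nonempty S with hS | ⟨⟨a⟩⟩
  · simp [univ_eq_empty_iff.mpr hS]
  · exact (hϖ a univ).trans_eq measure_univ

namespace ProbabilityTheory.Kernel

variable {R : Kernel S S} {ϖ : Measure S} [IsFiniteMeasure ϖ]

section Residual

variable (R ϖ) in
def residual (hϖ : ∀ a, ϖ ≤ R a) : Kernel S S where
  toFun a := R a - ϖ
  measurable' := Measure.measurable_of_measurable_coe _ fun B hB => by
    simp_rw [Measure.sub_apply hB (hϖ _)]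
    exact (R.measurable_coe hB).sub measurable_const

variable (hϖ : ∀ a, ϖ ≤ R a)

lemma const_add_residual : Kernel.const S ϖ + residual R ϖ hϖ = R := by
  ext1 a
  exact (add_comm _ _).trans (Measure.sub_add_cancel_of_le (hϖ a))

lemma residual_apply_univ [IsMarkovKernel R] (a : S) : residual R ϖ hϖ a univ = 1 - ϖ univ := by
  rw [← measure_univ (μ := R a)]
  exact Measure.sub_apply .univ (hϖ a)

lemma residual_comp_univ [IsMarkovKernel R] (ρ : Measure S) :
    (residual R ϖ hϖ ∘ₘ ρ) univ = (1 - ϖ univ) * ρ univ := by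
  simp [Measure.bind_apply .univ (residual R ϖ hϖ).aemeasurable, residual_apply_univ hϖ]

lemma comp_eq_smul_add_residual_comp (ρ : Measure S) :
    R ∘ₘ ρ = ρ univ • ϖ + residual R ϖ hϖ ∘ₘ ρ := by
  conv_lhs => rw [← const_add_residual hϖ]
  rw [Measure.add_comp, Measure.const_comp]

lemma kpow_residual_comp_univ [IsMarkovKernel R] (k : ℕ) :
    (kpow (residual R ϖ hϖ) k ∘ₘ ϖ) univ = (1 - ϖ univ) ^ k * ϖ univ := by
  induction k with
  | zero => rw [kpow_zero_comp, pow_zero, one_mul]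
  | succ k ih => rw [kpow_succ_comp, residual_comp_univ, ih, pow_succ', mul_assoc]

variable (R ϖ) in
def doeblinMeasure : Measure S := Measure.sum fun k => kpow (residual R ϖ hϖ) k ∘ₘ ϖ

lemma isProbabilityMeasure_doeblinMeasure [IsMarkovKernel R] (hϖ0 : ϖ univ ≠ 0) :
    IsProbabilityMeasure (doeblinMeasure R ϖ hϖ) := by
  constructor
  simp only [doeblinMeasure, Measure.sum_apply _ MeasurableSet.univ, kpow_residual_comp_univ]
  rw [ENNReal.tsum_mul_right, ENNReal.tsum_geometric,
    ENNReal.sub_sub_cancel ENNReal.one_ne_top (measure_univ_le_one_of_forall_le hϖ),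
    ENNReal.inv_mul_cancel hϖ0 (measure_ne_top _ _)]

lemma comp_doeblinMeasure [IsMarkovKernel R] (hϖ0 : ϖ univ ≠ 0) :
    R ∘ₘ doeblinMeasure R ϖ hϖ = doeblinMeasure R ϖ hϖ := by
  have := isProbabilityMeasure_doeblinMeasure hϖ hϖ0
  rw [comp_eq_smul_add_residual_comp hϖ, measure_univ, one_smul, doeblinMeasure,
    Measure.bind_sum _ _ (residual R ϖ hϖ).aemeasurable]
  ext B hB
  simp only [Measure.add_apply, Measure.sum_apply _ hB, ← kpow_succ_comp]
  conv_rhs => rw [tsum_eq_zero_add' ENNReal.summable, kpow_zero_comp]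

end Residual

theorem kpow_comp_apply_le [IsMarkovKernel R] (hϖ : ∀ a, ϖ ≤ R a) (m : ℕ) {ρ ρ' : Measure S}
    (hρ : ρ univ = ρ' univ) (B : Set S) :
    (kpow R m ∘ₘ ρ) B ≤ (kpow R m ∘ₘ ρ') B + ρ univ * (1 - ϖ univ) ^ m := by
  induction m generalizing ρ ρ' with
  | zero =>
    rw [kpow_zero_comp, kpow_zero_comp, pow_zero, mul_one]
    exact (measure_mono (subset_univ B)).trans (hρ ▸ le_add_self)
  | succ m ih =>
    have hres := ih (ρ := residual R ϖ hϖ ∘ₘ ρ) (ρ' := residual R ϖ hϖ ∘ₘ ρ')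
      (by rw [residual_comp_univ, residual_comp_univ, hρ])
    rw [residual_comp_univ] at hres
    rw [kpow_succ_comp', kpow_succ_comp', comp_eq_smul_add_residual_comp hϖ ρ,
      comp_eq_smul_add_residual_comp hϖ ρ', ← hρ]
    simp only [Measure.comp_add, Measure.comp_smul, Measure.add_apply, Measure.smul_apply,
      smul_eq_mul]
    calc _ ≤ ρ univ * (kpow R m ∘ₘ ϖ) B + ((kpow R m ∘ₘ (residual R ϖ hϖ ∘ₘ ρ')) B
            + (1 - ϖ univ) * ρ univ * (1 - ϖ univ) ^ m) := by gcongr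
      _ = _ := by ring

lemma apply_le_of_comp_eq [IsMarkovKernel R] (hϖ : ∀ a, ϖ ≤ R a) (hϖ0 : ϖ univ ≠ 0)
    {ρ ρ' : Measure S} (hρ : ρ univ = ρ' univ) (hρ_ne_top : ρ univ ≠ ∞)
    (h : R ∘ₘ ρ = ρ) (h' : R ∘ₘ ρ' = ρ') (B : Set S) : ρ B ≤ ρ' B := by
  refine ENNReal.le_of_forall_le_add_mul_pow hρ_ne_top
    (ENNReal.sub_lt_self ENNReal.one_ne_top one_ne_zero hϖ0) fun m => ?_
  simpa only [kpow_comp_of_comp_eq h, kpow_comp_of_comp_eq h'] using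
    kpow_comp_apply_le hϖ m hρ B

theorem eq_of_comp_eq [IsMarkovKernel R] (hϖ : ∀ a, ϖ ≤ R a) (hϖ0 : ϖ univ ≠ 0)
    {ρ ρ' : Measure S} [IsFiniteMeasure ρ] (hρ : ρ univ = ρ' univ)
    (h : R ∘ₘ ρ = ρ) (h' : R ∘ₘ ρ' = ρ') : ρ = ρ' :=
  Measure.ext fun B _ => le_antisymm
    (apply_le_of_comp_eq hϖ hϖ0 hρ (measure_ne_top ρ univ) h h' B)
    (apply_le_of_comp_eq hϖ hϖ0 hρ.symm (hρ ▸ measure_ne_top ρ univ) h' h B)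

theorem abs_toReal_kpow_apply_sub_le [IsMarkovKernel R] (hϖ : ∀ a, ϖ ≤ R a) {ν : Measure S}
    [IsProbabilityMeasure ν] (hν : R ∘ₘ ν = ν) (m : ℕ) (a : S) (B : Set S) :
    |(kpow R m a B).toReal - (ν B).toReal| ≤ ((1 - ϖ univ) ^ m).toReal := by
  have hdirac : kpow R m ∘ₘ Measure.dirac a = kpow R m a :=
    Measure.dirac_bind (kpow R m).measurable a
  have hmass : (Measure.dirac a) univ = ν univ := by simp
  have h₁ := kpow_comp_apply_le hϖ m hmass B
  have h₂ := kpow_comp_apply_le hϖ m hmass.symm B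
  rw [hdirac, kpow_comp_of_comp_eq hν, measure_univ, one_mul] at h₁ h₂
  exact ENNReal.abs_toReal_sub_toReal_le (measure_ne_top _ _) (measure_ne_top _ _) (by finiteness) h₁ h₂

end ProbabilityTheory.Kernel

end Doeblin

theorem stmt6_general {S : Type*} [MeasurableSpace S]
    (R : Kernel S S) [IsMarkovKernel R]
    (c : ℝ) (hc0 : 0 < c)
    (μ : Measure S) [IsProbabilityMeasure μ]
    (hDoeblin : ∀ a : S, ∀ B : Set S, MeasurableSet B →
      ENNReal.ofReal c * μ B ≤ R a B) :
    ∃ ν : Measure S, IsProbabilityMeasure ν ∧ ν.bind (fun a => R a) = ν ∧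
      (∀ ν' : Measure S, IsProbabilityMeasure ν' →
        ν'.bind (fun a => R a) = ν' → ν' = ν) ∧
      ∀ m : ℕ, ∀ a : S, ∀ B : Set S, MeasurableSet B →
        |((kpow R m) a B).toReal - (ν B).toReal| ≤ (1 - c) ^ m := by
  set ϖ : Measure S := c.toNNReal • μ
  have hϖ : ∀ a, ϖ ≤ R a := fun a => Measure.le_iff.2 (hDoeblin a)
  have hϖ_univ : ϖ Set.univ = ENNReal.ofReal c := by simp [ϖ, ENNReal.ofReal]
  have hϖ0 : ϖ Set.univ ≠ 0 := hϖ_univ ▸ (ENNReal.ofReal_pos.2 hc0).ne'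
  have hc1 : ENNReal.ofReal c ≤ 1 := hϖ_univ ▸ measure_univ_le_one_of_forall_le hϖ
  have hν := Kernel.isProbabilityMeasure_doeblinMeasure hϖ hϖ0
  have hinv := Kernel.comp_doeblinMeasure hϖ hϖ0
  refine ⟨_, hν, hinv, fun ν' _ hν' => Kernel.eq_of_comp_eq hϖ hϖ0 (by simp) hν' hinv,
    fun m a B _ => ?_⟩
  have hbound := Kernel.abs_toReal_kpow_apply_sub_le hϖ hinv m a B
  rwa [hϖ_univ, ENNReal.toReal_pow, ENNReal.toReal_sub_of_le hc1 ENNReal.one_ne_top,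
    ENNReal.toReal_one, ENNReal.toReal_ofReal hc0.le] at hbound

theorem stmt6 {S : Type*} [MeasurableSpace S]
    (R : Kernel S S) [IsMarkovKernel R]
    (c : ℝ) (hc0 : 0 < c) (hc1 : c ≤ 1)
    (μ : Measure S) [IsProbabilityMeasure μ]
    (hDoeblin : ∀ a : S, ∀ B : Set S, MeasurableSet B →
      ENNReal.ofReal c * μ B ≤ R a B) :
    ∃ ν : Measure S, IsProbabilityMeasure ν ∧ ν.bind (fun a => R a) = ν ∧
      (∀ ν' : Measure S, IsProbabilityMeasure ν' →
        ν'.bind (fun a => R a) = ν' → ν' = ν) ∧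
      ∀ m : ℕ, ∀ a : S, ∀ B : Set S, MeasurableSet B →
        |((kpow R m) a B).toReal - (ν B).toReal| ≤ (1 - c) ^ m :=
  stmt6_general R c hc0 μ hDoeblin

end
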